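/- arXiv:1905.05177 — 2 statements merged into one kernel-verified Lean document; each statement's English description precedes it below -/
import Mathlib

section
/- Let R_1, …, R_K be real symmetric positive semidefinite d×d matrices and suppose R = Σ_{k=1}^K R_k is positive definite (hence invertible). Let W_1, …, W_K be d×q real matrices, let Ŵ be any d×q real matrix, and define the aggregated matrix W_A = R^{-1} (Σ_{k=1}^K R_k W_k). Then ‖W_A − Ŵ‖ ≤ S_1 · max_{1≤k≤K} ‖W_k − Ŵ‖, where S_1 = K · max_k λmax(R_k) / λmin(R). -/
open Matrix BigOperators

/-- The spectral norm (ℓ²→ℓ² operator norm) of a real matrix. -/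
noncomputable def specNorm {m n : ℕ} (A : Matrix (Fin m) (Fin n) ℝ) : ℝ :=
  ‖LinearMap.toContinuousLinearMap (Matrix.toEuclideanLin A)‖

/-- The largest (real) eigenvalue of a real matrix, as the supremum of its real spectrum. -/
noncomputable def lambdaMax {d : ℕ} (A : Matrix (Fin d) (Fin d) ℝ) : ℝ :=
  sSup (spectrum ℝ A)

/-- The smallest (real) eigenvalue of a real matrix, as the infimum of its real spectrum. -/
noncomputable def lambdaMin {d : ℕ} (A : Matrix (Fin d) (Fin d) ℝ) : ℝ :=
  sInf (spectrum ℝ A)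

open scoped Matrix.Norms.L2Operator

section Aux

variable {d : ℕ} {A : Matrix (Fin d) (Fin d) ℝ}

lemma specNorm_eq_l2 {m n : ℕ} (A : Matrix (Fin m) (Fin n) ℝ) : specNorm A = ‖A‖ := rfl

lemma aux_repr (hA : A.IsHermitian) (x : EuclideanSpace ℝ (Fin d)) (i : Fin d) :
    hA.eigenvectorBasis.repr (toEuclideanLin A x) i
      = hA.eigenvalues i * hA.eigenvectorBasis.repr x i := by
  have hb : toEuclideanLin A (hA.eigenvectorBasis i)
      = hA.eigenvalues i • hA.eigenvectorBasis i := by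
    apply PiLp.ext
    intro j
    have := congrFun (hA.mulVec_eigenvectorBasis i) j
    simpa [toEuclideanLin_apply] using this
  have hsym := (isHermitian_iff_isSymmetric.1 hA)
  rw [OrthonormalBasis.repr_apply_apply, OrthonormalBasis.repr_apply_apply,
    ← hsym (hA.eigenvectorBasis i) x, hb]
  simp [real_inner_smul_left, Finset.mul_sum, mul_assoc]

lemma aux_norm_sq (hA : A.IsHermitian) (y : EuclideanSpace ℝ (Fin d)) :
    ‖y‖ ^ 2 = ∑ i, (hA.eigenvectorBasis.repr y i) ^ 2 := by
  rw [← hA.eigenvectorBasis.repr.norm_map y, EuclideanSpace.norm_eq,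
    Real.sq_sqrt (by positivity)]
  simp [sq_abs]

lemma aux_normTA_sq (hA : A.IsHermitian) (x : EuclideanSpace ℝ (Fin d)) :
    ‖toEuclideanLin A x‖ ^ 2
      = ∑ i, (hA.eigenvalues i) ^ 2 * (hA.eigenvectorBasis.repr x i) ^ 2 := by
  rw [aux_norm_sq hA]
  congr 1; funext i
  rw [aux_repr hA x i, mul_pow]

lemma spectrum_bddAbove : BddAbove (spectrum ℝ A) := by
  classical
  rcases eq_or_ne d 0 with h | h
  · subst h
    have : spectrum ℝ A = ∅ := by
      ext z
      simp only [Set.mem_empty_iff_false, iff_false, spectrum.mem_iff, not_not]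
      exact isUnit_of_subsingleton _
    rw [this]; exact bddAbove_empty
  · exact Set.Finite.bddAbove A.finite_real_spectrum

lemma spectrum_bddBelow : BddBelow (spectrum ℝ A) := by
  classical
  rcases eq_or_ne d 0 with h | h
  · subst h
    have : spectrum ℝ A = ∅ := by
      ext z
      simp only [Set.mem_empty_iff_false, iff_false, spectrum.mem_iff, not_not]
      exact isUnit_of_subsingleton _
    rw [this]; exact bddBelow_empty
  · exact Set.Finite.bddBelow A.finite_real_spectrum

lemma eig_le_lambdaMax (hA : A.IsHermitian) (i : Fin d) :
    hA.eigenvalues i ≤ lambdaMax A :=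
  le_csSup spectrum_bddAbove (hA.eigenvalues_mem_spectrum_real i)

lemma lambdaMin_le_eig (hA : A.IsHermitian) (i : Fin d) :
    lambdaMin A ≤ hA.eigenvalues i :=
  csInf_le spectrum_bddBelow (hA.eigenvalues_mem_spectrum_real i)

lemma lambdaMax_nonneg (hA : A.PosSemidef) : 0 ≤ lambdaMax A := by
  rcases Nat.eq_zero_or_pos d with h | h
  · subst h
    have : spectrum ℝ A = ∅ := by
      ext z
      simp only [Set.mem_empty_iff_false, iff_false, spectrum.mem_iff, not_not]
      exact isUnit_of_subsingleton _
    rw [lambdaMax, this, Real.sSup_empty]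
  · exact le_trans (hA.eigenvalues_nonneg ⟨0, h⟩) (eig_le_lambdaMax hA.1 ⟨0, h⟩)

lemma lambdaMin_nonneg (hA : A.PosSemidef) : 0 ≤ lambdaMin A := by
  rcases Nat.eq_zero_or_pos d with h | h
  · subst h
    have : spectrum ℝ A = ∅ := by
      ext z
      simp only [Set.mem_empty_iff_false, iff_false, spectrum.mem_iff, not_not]
      exact isUnit_of_subsingleton _
    rw [lambdaMin, this, Real.sInf_empty]
  · classical
    have hne : (spectrum ℝ A).Nonempty := ⟨_, hA.1.eigenvalues_mem_spectrum_real ⟨0, h⟩⟩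
    have hmem : lambdaMin A ∈ spectrum ℝ A :=
      hne.csInf_mem A.finite_real_spectrum
    rw [Matrix.IsHermitian.spectrum_real_eq_range_eigenvalues hA.1] at hmem
    obtain ⟨i, hi⟩ := hmem
    exact hi ▸ hA.eigenvalues_nonneg i

lemma norm_le_lambdaMax (hA : A.PosSemidef) : ‖A‖ ≤ lambdaMax A := by
  rw [l2_opNorm_def]
  apply ContinuousLinearMap.opNorm_le_bound _ (lambdaMax_nonneg hA)
  intro x
  simp only [LinearEquiv.trans_apply, LinearMap.coe_toContinuousLinearMap']
  have hsq : ‖toEuclideanLin A x‖ ^ 2 ≤ (lambdaMax A * ‖x‖) ^ 2 := by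
    rw [aux_normTA_sq hA.1, mul_pow, aux_norm_sq hA.1 x, Finset.mul_sum]
    apply Finset.sum_le_sum
    intro i _
    have h1 : 0 ≤ hA.1.eigenvalues i := hA.eigenvalues_nonneg i
    have h2 : hA.1.eigenvalues i ≤ lambdaMax A := eig_le_lambdaMax hA.1 i
    have := sq_nonneg (hA.1.eigenvectorBasis.repr x i)
    exact mul_le_mul_of_nonneg_right (by nlinarith) this
  have h1 : (0:ℝ) ≤ ‖toEuclideanLin A x‖ := norm_nonneg _
  have h2 : (0:ℝ) ≤ lambdaMax A * ‖x‖ :=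
    mul_nonneg (lambdaMax_nonneg hA) (norm_nonneg _)
  nlinarith

lemma norm_inv_le (hA : A.PosDef) : ‖A⁻¹‖ ≤ (lambdaMin A)⁻¹ := by
  rcases Nat.eq_zero_or_pos d with h | h
  · subst h
    have h0 : A⁻¹ = 0 := Subsingleton.elim _ _
    rw [h0, norm_zero]
    exact inv_nonneg.2 (lambdaMin_nonneg hA.posSemidef)
  · have hm : 0 < lambdaMin A := by
      classical
      have hne : (spectrum ℝ A).Nonempty := ⟨_, hA.1.eigenvalues_mem_spectrum_real ⟨0, h⟩⟩
      have hmem : lambdaMin A ∈ spectrum ℝ A := hne.csInf_mem A.finite_real_spectrum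
      rw [Matrix.IsHermitian.spectrum_real_eq_range_eigenvalues hA.1] at hmem
      obtain ⟨i, hi⟩ := hmem
      exact hi ▸ hA.eigenvalues_pos i
    rw [l2_opNorm_def]
    apply ContinuousLinearMap.opNorm_le_bound _ (inv_nonneg.2 hm.le)
    intro x
    simp only [LinearEquiv.trans_apply, LinearMap.coe_toContinuousLinearMap']
    set y := toEuclideanLin A⁻¹ x with hy
    have hAy : toEuclideanLin A y = x := by
      rw [hy]
      have : toEuclideanLin A (toEuclideanLin A⁻¹ x) = toEuclideanLin (A * A⁻¹) x := by
        simp only [toEuclideanLin_apply, Equiv.apply_symm_apply, mulVec_mulVec]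
      rw [this, Matrix.mul_nonsing_inv _ (isUnit_iff_ne_zero.2 hA.det_pos.ne')]
      simp [toEuclideanLin_apply]
    have hsq : (lambdaMin A * ‖y‖) ^ 2 ≤ ‖toEuclideanLin A y‖ ^ 2 := by
      rw [aux_normTA_sq hA.1, mul_pow, aux_norm_sq hA.1 y, Finset.mul_sum]
      apply Finset.sum_le_sum
      intro i _
      have h1 : lambdaMin A ≤ hA.1.eigenvalues i := lambdaMin_le_eig hA.1 i
      have := sq_nonneg (hA.1.eigenvectorBasis.repr y i)
      exact mul_le_mul_of_nonneg_right (by nlinarith [hm.le]) this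
    have hkey : lambdaMin A * ‖y‖ ≤ ‖x‖ := by
      rw [← hAy]
      have h1 : (0:ℝ) ≤ lambdaMin A * ‖y‖ := mul_nonneg hm.le (norm_nonneg _)
      have h2 : (0:ℝ) ≤ ‖toEuclideanLin A y‖ := norm_nonneg _
      nlinarith
    rw [inv_mul_eq_div, le_div_iff₀ hm]
    linarith [hkey]

end Aux

theorem adml_aggregation_bound {d q K : ℕ} (hK : 1 ≤ K)
    (R : Fin K → Matrix (Fin d) (Fin d) ℝ)
    (hpsd : ∀ k, (R k).PosSemidef)
    (hpd : (∑ k, R k).PosDef)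
    (W : Fin K → Matrix (Fin d) (Fin q) ℝ)
    (What : Matrix (Fin d) (Fin q) ℝ)
    (WA : Matrix (Fin d) (Fin q) ℝ)
    (hWA : WA = (∑ k, R k)⁻¹ * (∑ k, R k * W k))
    (S1 : ℝ)
    (hS1 : S1 = (K : ℝ) * (⨆ k, lambdaMax (R k)) / lambdaMin (∑ k, R k)) :
    specNorm (WA - What) ≤ S1 * ⨆ k, specNorm (W k - What) := by
  classical
  have k0 : Fin K := ⟨0, hK⟩
  set Rs : Matrix (Fin d) (Fin d) ℝ := ∑ k, R k with hRs
  have hinv : Rs⁻¹ * Rs = 1 :=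
    Matrix.nonsing_inv_mul _ (isUnit_iff_ne_zero.2 hpd.det_pos.ne')
  have hdecomp : WA - What = ∑ k, Rs⁻¹ * (R k * (W k - What)) := by
    calc WA - What = Rs⁻¹ * (∑ k, R k * W k) - Rs⁻¹ * Rs * What := by
          rw [hWA, hinv, Matrix.one_mul]
      _ = ∑ k, Rs⁻¹ * (R k * (W k - What)) := by
          have hsum : Rs * What = ∑ k, R k * What := by
            rw [hRs, Matrix.sum_mul]
          rw [Matrix.mul_assoc, hsum, ← Matrix.mul_sub, ← Finset.sum_sub_distrib,
            Matrix.mul_sum]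
          refine Finset.sum_congr rfl fun k _ => ?_
          simp only [Matrix.mul_sub]
  simp only [specNorm_eq_l2]
  set N := ⨆ k, ‖W k - What‖ with hN
  set L := ⨆ k, lambdaMax (R k) with hL
  set m := lambdaMin Rs with hm
  have hBN : ∀ k, ‖W k - What‖ ≤ N := fun k =>
    le_ciSup (f := fun k => ‖W k - What‖) (Set.Finite.bddAbove (Set.finite_range _)) k
  have hN0 : (0:ℝ) ≤ N := le_trans (norm_nonneg _) (hBN k0)
  have hBL : ∀ k, lambdaMax (R k) ≤ L := fun k =>
    le_ciSup (f := fun k => lambdaMax (R k)) (Set.Finite.bddAbove (Set.finite_range _)) k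
  have hL0 : (0:ℝ) ≤ L := le_trans (lambdaMax_nonneg (hpsd k0)) (hBL k0)
  have hm0 : (0:ℝ) ≤ m := lambdaMin_nonneg hpd.posSemidef
  have hterm : ∀ k, ‖Rs⁻¹ * (R k * (W k - What))‖ ≤ m⁻¹ * (L * N) := by
    intro k
    have t1 : ‖Rs⁻¹‖ ≤ m⁻¹ := norm_inv_le hpd
    have t2 : ‖R k * (W k - What)‖ ≤ L * N := by
      refine le_trans (l2_opNorm_mul _ _) ?_
      exact mul_le_mul (le_trans (norm_le_lambdaMax (hpsd k)) (hBL k)) (hBN k)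
        (norm_nonneg _) hL0
    exact le_trans (l2_opNorm_mul _ _)
      (mul_le_mul t1 t2 (norm_nonneg _) (inv_nonneg.2 hm0))
  calc ‖WA - What‖ = ‖∑ k, Rs⁻¹ * (R k * (W k - What))‖ := by rw [hdecomp]
    _ ≤ ∑ k : Fin K, ‖Rs⁻¹ * (R k * (W k - What))‖ := norm_sum_le _ _
    _ ≤ ∑ _k : Fin K, m⁻¹ * (L * N) := Finset.sum_le_sum fun k _ => hterm k
    _ = (K : ℝ) * (m⁻¹ * (L * N)) := by
        rw [Finset.sum_const, Finset.card_univ, Fintype.card_fin, nsmul_eq_mul]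
    _ = S1 * N := by rw [hS1, div_eq_mul_inv]; ring
end

section
/- Let R_1, …, R_K be real symmetric positive semidefinite d×d matrices with R = Σ_{k=1}^K R_k positive definite, let W_1, …, W_K be d×q real matrices, and define W_A = R^{-1} (Σ_{k=1}^K R_k W_k). Then for any two d×q real matrices W₀ and W_G, ‖W_A − W_G‖ ≤ S_1 · max_{1≤k≤K} ‖W_k − W₀‖ + ‖W_G − W₀‖, where S_1 = K · max_k λmax(R_k) / λmin(R). -/
open Matrix BigOperators

lemma specNorm_nonneg {m n : ℕ} (A : Matrix (Fin m) (Fin n) ℝ) : 0 ≤ specNorm A :=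
  norm_nonneg _

lemma specNorm_le_bound {m n : ℕ} {A : Matrix (Fin m) (Fin n) ℝ} {c : ℝ} (hc : 0 ≤ c)
    (h : ∀ x : EuclideanSpace ℝ (Fin n), ‖toEuclideanLin A x‖ ≤ c * ‖x‖) : specNorm A ≤ c :=
  ContinuousLinearMap.opNorm_le_bound _ hc fun x => by simpa using h x

lemma specNorm_apply_le {m n : ℕ} (A : Matrix (Fin m) (Fin n) ℝ) (x : EuclideanSpace ℝ (Fin n)) :
    ‖toEuclideanLin A x‖ ≤ specNorm A * ‖x‖ := by
  exact (LinearMap.toContinuousLinearMap (toEuclideanLin A)).le_opNorm x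

lemma specNorm_add_le {m n : ℕ} (A B : Matrix (Fin m) (Fin n) ℝ) :
    specNorm (A + B) ≤ specNorm A + specNorm B := by
  unfold specNorm; rw [map_add, map_add]; exact norm_add_le _ _

lemma specNorm_neg {m n : ℕ} (A : Matrix (Fin m) (Fin n) ℝ) : specNorm (-A) = specNorm A := by
  unfold specNorm; rw [map_neg, map_neg, norm_neg]

lemma specNorm_sum_le {m n : ℕ} {ι : Type*} (s : Finset ι) (f : ι → Matrix (Fin m) (Fin n) ℝ) :
    specNorm (∑ k ∈ s, f k) ≤ ∑ k ∈ s, specNorm (f k) := by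
  unfold specNorm; rw [map_sum, map_sum]; exact norm_sum_le _ _

lemma toEuclideanLin_mul_apply {m n p : ℕ} (A : Matrix (Fin m) (Fin n) ℝ)
    (B : Matrix (Fin n) (Fin p) ℝ) (x : EuclideanSpace ℝ (Fin p)) :
    toEuclideanLin (A * B) x = toEuclideanLin A (toEuclideanLin B x) := by
  simp [toEuclideanLin_apply, ← mulVec_mulVec]

lemma specNorm_mul_le {m n p : ℕ} (A : Matrix (Fin m) (Fin n) ℝ) (B : Matrix (Fin n) (Fin p) ℝ) :
    specNorm (A * B) ≤ specNorm A * specNorm B := by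
  apply specNorm_le_bound (mul_nonneg (specNorm_nonneg A) (specNorm_nonneg B))
  intro x
  rw [toEuclideanLin_mul_apply]
  calc ‖toEuclideanLin A (toEuclideanLin B x)‖
      ≤ specNorm A * ‖toEuclideanLin B x‖ := specNorm_apply_le _ _
    _ ≤ specNorm A * (specNorm B * ‖x‖) :=
        mul_le_mul_of_nonneg_left (specNorm_apply_le _ _) (specNorm_nonneg A)
    _ = specNorm A * specNorm B * ‖x‖ := (mul_assoc _ _ _).symm

lemma specNorm_le_of_eigs {d : ℕ} {A : Matrix (Fin d) (Fin d) ℝ} (hA : A.IsHermitian)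
    {c : ℝ} (hc : 0 ≤ c) (h : ∀ i, |hA.eigenvalues i| ≤ c) : specNorm A ≤ c := by
  apply specNorm_le_bound hc
  intro x
  classical
  set b := hA.eigenvectorBasis with hb
  have hTb : ∀ i, toEuclideanLin A (b i) = hA.eigenvalues i • b i := by
    intro i
    rw [toEuclideanLin_apply]
    ext j
    have := congrFun (hA.mulVec_eigenvectorBasis i) j
    simpa using this
  have hsym : (toEuclideanLin A).IsSymmetric := isHermitian_iff_isSymmetric.mp hA
  have hr : ∀ i, b.repr (toEuclideanLin A x) i = hA.eigenvalues i * b.repr x i := by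
    intro i
    rw [b.repr_apply_apply, b.repr_apply_apply, ← hsym (b i) x, hTb i, real_inner_smul_left]
  calc ‖toEuclideanLin A x‖ = ‖b.repr (toEuclideanLin A x)‖ := (b.repr.norm_map _).symm
    _ = Real.sqrt (∑ i, ‖b.repr (toEuclideanLin A x) i‖ ^ 2) := EuclideanSpace.norm_eq _
    _ ≤ Real.sqrt (∑ i, c ^ 2 * ‖b.repr x i‖ ^ 2) := by
        apply Real.sqrt_le_sqrt
        apply Finset.sum_le_sum
        intro i _
        rw [hr i]
        have h1 : ‖hA.eigenvalues i * b.repr x i‖ ≤ c * ‖b.repr x i‖ := by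
          rw [norm_mul]
          exact mul_le_mul_of_nonneg_right (by simpa [Real.norm_eq_abs] using h i)
            (norm_nonneg _)
        calc ‖hA.eigenvalues i * b.repr x i‖ ^ 2 ≤ (c * ‖b.repr x i‖) ^ 2 :=
              pow_le_pow_left₀ (norm_nonneg _) h1 2
          _ = c ^ 2 * ‖b.repr x i‖ ^ 2 := by ring
    _ = c * Real.sqrt (∑ i, ‖b.repr x i‖ ^ 2) := by
        rw [← Finset.mul_sum, Real.sqrt_mul (by positivity), Real.sqrt_sq hc]
    _ = c * ‖x‖ := by rw [← EuclideanSpace.norm_eq, b.repr.norm_map]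

theorem adml_consistency {d q K : ℕ} (hK : 1 ≤ K)
    (R : Fin K → Matrix (Fin d) (Fin d) ℝ)
    (hpsd : ∀ k, (R k).PosSemidef)
    (hpd : (∑ k, R k).PosDef)
    (W : Fin K → Matrix (Fin d) (Fin q) ℝ)
    (WA : Matrix (Fin d) (Fin q) ℝ)
    (hWA : WA = (∑ k, R k)⁻¹ * (∑ k, R k * W k))
    (W0 WG : Matrix (Fin d) (Fin q) ℝ)
    (S1 : ℝ)
    (hS1 : S1 = (K : ℝ) * (⨆ k, lambdaMax (R k)) / lambdaMin (∑ k, R k)) :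
    specNorm (WA - WG) ≤ S1 * (⨆ k, specNorm (W k - W0)) + specNorm (WG - W0) := by
  classical
  haveI : Nonempty (Fin K) := ⟨⟨0, hK⟩⟩
  rcases Nat.eq_zero_or_pos d with hd | hd
  · -- degenerate case d = 0
    subst hd
    have hzero : ∀ (A : Matrix (Fin 0) (Fin q) ℝ), specNorm A = 0 := by
      intro A
      have : LinearMap.toContinuousLinearMap (toEuclideanLin A) = 0 := by
        apply ContinuousLinearMap.ext; intro x; exact Subsingleton.elim _ _
      simp [specNorm, this]
    have hspec : spectrum ℝ (∑ k, R k) = ∅ := by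
      ext r
      simp [spectrum.mem_iff, isUnit_of_subsingleton]
    have hS1' : S1 = 0 := by
      rw [hS1, lambdaMin, hspec, Real.sInf_empty, div_zero]
    have hsup : (⨆ k, specNorm (W k - W0)) = 0 := by
      simp [hzero]
    rw [hS1', hsup, hzero, hzero]
    norm_num
  · -- main case
    set S := ∑ k, R k with hS
    have hSH : S.IsHermitian := hpd.1
    have hRH : ∀ k, (R k).IsHermitian := fun k => (hpsd k).1
    -- lambdaMin facts
    have hspecS : spectrum ℝ S = Set.range hSH.eigenvalues :=
      Matrix.IsHermitian.spectrum_real_eq_range_eigenvalues hSH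
    have hfinS : (Set.range hSH.eigenvalues).Finite := Set.finite_range _
    have hneS : (Set.range hSH.eigenvalues).Nonempty := ⟨_, ⟨(⟨0, hd⟩ : Fin d), rfl⟩⟩
    have hmin_mem : lambdaMin S ∈ Set.range hSH.eigenvalues := by
      rw [lambdaMin, hspecS]; exact hneS.csInf_mem hfinS
    have hminpos : 0 < lambdaMin S := by
      obtain ⟨j, hj⟩ := hmin_mem
      rw [← hj]; exact hpd.eigenvalues_pos j
    have hmin_le : ∀ j, lambdaMin S ≤ hSH.eigenvalues j := fun j => by
      rw [lambdaMin, hspecS]; exact csInf_le hfinS.bddBelow ⟨j, rfl⟩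
    -- invertibility of S
    have hdet : S.det ≠ 0 := hpd.det_pos.ne'
    have hSu : IsUnit S := (Matrix.isUnit_iff_isUnit_det S).mpr (isUnit_iff_ne_zero.mpr hdet)
    -- norm of S⁻¹
    have hSinv : S⁻¹.PosDef := hpd.inv
    have hinv_norm : specNorm S⁻¹ ≤ (lambdaMin S)⁻¹ := by
      have hH' : S⁻¹.IsHermitian := hSinv.1
      apply specNorm_le_of_eigs hH' (by positivity)
      intro i
      have hpos : 0 < hH'.eigenvalues i := hSinv.eigenvalues_pos i
      rw [abs_of_pos hpos]
      have hmem : hH'.eigenvalues i ∈ spectrum ℝ S⁻¹ := hH'.eigenvalues_mem_spectrum_real i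
      set u := hSu.unit with hu
      have hucoe : (↑u : Matrix (Fin d) (Fin d) ℝ) = S := hSu.unit_spec
      have huinv : ((u⁻¹ : (Matrix (Fin d) (Fin d) ℝ)ˣ) : Matrix (Fin d) (Fin d) ℝ) = S⁻¹ := by
        rw [Matrix.coe_units_inv, hucoe]
      set r : ℝˣ := Units.mk0 _ hpos.ne' with hr
      have hmem' : (↑r : ℝ) ∈ spectrum ℝ ((u⁻¹ : (Matrix (Fin d) (Fin d) ℝ)ˣ) : Matrix (Fin d) (Fin d) ℝ) := by
        rw [huinv]; exact hmem
      have h2 := spectrum.inv_mem_iff.mp hmem'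
      rw [inv_inv, hucoe, hspecS] at h2
      obtain ⟨j, hj⟩ := h2
      have hle := hmin_le j
      rw [hj] at hle
      have : (↑(r⁻¹) : ℝ) = (hH'.eigenvalues i)⁻¹ := by simp [hr]
      rw [this] at hle
      calc hH'.eigenvalues i = ((hH'.eigenvalues i)⁻¹)⁻¹ := (inv_inv _).symm
        _ ≤ (lambdaMin S)⁻¹ := by
            exact inv_anti₀ hminpos hle
    -- lambdaMax facts
    have hmax_mem : ∀ k, lambdaMax (R k) ∈ Set.range (hRH k).eigenvalues := by
      intro k
      rw [lambdaMax, Matrix.IsHermitian.spectrum_real_eq_range_eigenvalues (hRH k)]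
      exact Set.Nonempty.csSup_mem ⟨_, ⟨(⟨0, hd⟩ : Fin d), rfl⟩⟩ (Set.finite_range _)
    have hmax_nonneg : ∀ k, 0 ≤ lambdaMax (R k) := by
      intro k
      obtain ⟨j, hj⟩ := hmax_mem k
      rw [← hj]; exact (hpsd k).eigenvalues_nonneg j
    have hnormR : ∀ k, specNorm (R k) ≤ lambdaMax (R k) := by
      intro k
      apply specNorm_le_of_eigs (hRH k) (hmax_nonneg k)
      intro i
      rw [abs_of_nonneg ((hpsd k).eigenvalues_nonneg i)]
      rw [lambdaMax, Matrix.IsHermitian.spectrum_real_eq_range_eigenvalues (hRH k)]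
      exact le_csSup (Set.finite_range _).bddAbove ⟨i, rfl⟩
    -- sups
    set L := ⨆ k, lambdaMax (R k) with hL
    set M := ⨆ k, specNorm (W k - W0) with hM
    have hLk : ∀ k, lambdaMax (R k) ≤ L := fun k =>
      le_ciSup (f := fun k => lambdaMax (R k)) (Set.finite_range _).bddAbove k
    have hMk : ∀ k, specNorm (W k - W0) ≤ M := fun k =>
      le_ciSup (f := fun k => specNorm (W k - W0)) (Set.finite_range _).bddAbove k
    have hL0 : 0 ≤ L := (hmax_nonneg ⟨0, hK⟩).trans (hLk ⟨0, hK⟩)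
    have hM0 : 0 ≤ M := (specNorm_nonneg _).trans (hMk ⟨0, hK⟩)
    -- algebraic identity
    have hid : S⁻¹ * S = 1 := Matrix.nonsing_inv_mul S (isUnit_iff_ne_zero.mpr hdet)
    have hWA0 : WA - W0 = S⁻¹ * (∑ k, R k * (W k - W0)) := by
      have hsum : ∑ k, R k * (W k - W0) = (∑ k, R k * W k) - S * W0 := by
        have hms : ∀ k : Fin K, R k * (W k - W0) = R k * W k - R k * W0 :=
          fun k => Matrix.mul_sub _ _ _
        simp_rw [hms]
        rw [Finset.sum_sub_distrib, hS, Matrix.sum_mul]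
      rw [hWA, hsum, Matrix.mul_sub, ← Matrix.mul_assoc, hid, Matrix.one_mul]
    -- bound on WA - W0
    have h1 : specNorm (WA - W0) ≤ (lambdaMin S)⁻¹ * ((K : ℝ) * (L * M)) := by
      rw [hWA0]
      calc specNorm (S⁻¹ * ∑ k, R k * (W k - W0))
          ≤ specNorm S⁻¹ * specNorm (∑ k, R k * (W k - W0)) := specNorm_mul_le _ _
        _ ≤ (lambdaMin S)⁻¹ * ((K : ℝ) * (L * M)) := by
            apply mul_le_mul hinv_norm ?_ (specNorm_nonneg _) (by positivity)
            calc specNorm (∑ k, R k * (W k - W0))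
                ≤ ∑ k, specNorm (R k * (W k - W0)) := specNorm_sum_le _ _
              _ ≤ ∑ _k : Fin K, L * M := by
                  apply Finset.sum_le_sum
                  intro k _
                  calc specNorm (R k * (W k - W0))
                      ≤ specNorm (R k) * specNorm (W k - W0) := specNorm_mul_le _ _
                    _ ≤ L * M := mul_le_mul ((hnormR k).trans (hLk k)) (hMk k)
                        (specNorm_nonneg _) hL0
              _ = (K : ℝ) * (L * M) := by
                  rw [Finset.sum_const, Finset.card_univ, Fintype.card_fin, nsmul_eq_mul]
    -- triangle inequality
    have htri : specNorm (WA - WG) ≤ specNorm (WA - W0) + specNorm (WG - W0) := by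
      have hsplit : WA - WG = (WA - W0) + -(WG - W0) := by abel
      rw [hsplit]
      exact (specNorm_add_le _ _).trans (by rw [specNorm_neg])
    have hS1M : (lambdaMin S)⁻¹ * ((K : ℝ) * (L * M)) = S1 * M := by
      rw [hS1, div_eq_mul_inv]; ring
    calc specNorm (WA - WG) ≤ specNorm (WA - W0) + specNorm (WG - W0) := htri
      _ ≤ (lambdaMin S)⁻¹ * ((K : ℝ) * (L * M)) + specNorm (WG - W0) :=
          add_le_add h1 le_rfl
      _ = S1 * M + specNorm (WG - W0) := by rw [hS1M]
end
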